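/- arXiv:math/0203294 — 5 statements merged into one kernel-verified Lean document; each statement's English description precedes it below -/
import Mathlib

section
/- Let χ be a primitive, even, quadratic Dirichlet character modulo f with f > 1 (so χ² = 1, χ ≠ 1, χ(−1) = 1, and the conductor of χ equals f). Then the derivative of the Dirichlet L-function of χ at s = 0 is nonzero: L'(0, χ) ≠ 0; i.e. L(s,χ) has a simple zero at s = 0. -/
/-!
Since `χ` is even, `L(s, χ) = Λ(s, χ) / Γℝ(s)`, and `1 / Γℝ` has a simple zero at `0` with
derivative `1 / 2` there, so `L'(0, χ) = Λ(0, χ) / 2`. The functional equation gives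
`Λ(0, χ) = f ^ (1 / 2) · ε(χ) · Λ(1, χ⁻¹)`; the root number `ε(χ)` is a nonzero multiple of a
Gauss sum, which cannot vanish for a primitive character, and `Λ(1, χ⁻¹)` is nonzero because
`L(1, χ⁻¹)` is.
-/

open DirichletCharacter Complex Filter Topology

lemma Gammaℝ_zero_eq_zero : Gammaℝ 0 = 0 :=
  Gammaℝ_eq_zero_iff.mpr ⟨0, by simp⟩

lemma hasDerivAt_inv_Gammaℝ_zero : HasDerivAt (fun s : ℂ ↦ (Gammaℝ s)⁻¹) (1 / 2) 0 := by
  rw [hasDerivAt_iff_tendsto_slope, slope_fun_def_field, Gammaℝ_zero_eq_zero, inv_zero,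
    one_div]
  refine (Gammaℝ_residue_zero.inv₀ two_ne_zero).congr' ?_
  filter_upwards with s
  rw [sub_zero, sub_zero, mul_inv, div_eq_mul_inv, mul_comm]

namespace DirichletCharacter

variable {N : ℕ} [NeZero N] {χ : DirichletCharacter ℂ N}

lemma Even.hasDerivAt_LFunction_zero (hχ : χ.Even) (hχ₁ : χ ≠ 1) :
    HasDerivAt χ.LFunction (completedLFunction χ 0 / 2) 0 := by
  have hN : N ≠ 1 := hχ₁ ∘ level_one' χ
  have hL : χ.LFunction = fun s ↦ completedLFunction χ s * (Gammaℝ s)⁻¹ := by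
    ext s
    rw [LFunction_eq_completed_div_gammaFactor χ s (Or.inr hN), hχ.gammaFactor_def,
      div_eq_mul_inv]
  have h := ((differentiable_completedLFunction hχ₁ 0).hasDerivAt).fun_mul
    hasDerivAt_inv_Gammaℝ_zero
  rwa [Gammaℝ_zero_eq_zero, inv_zero, mul_zero, zero_add, mul_one_div, ← hL] at h

lemma completedLFunction_one_ne_zero (hχ : χ ≠ 1) : completedLFunction χ 1 ≠ 0 := by
  intro h
  apply LFunction_apply_one_ne_zero hχ
  rw [LFunction_eq_completed_div_gammaFactor χ 1 (Or.inl one_ne_zero), h, zero_div]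

lemma IsPrimitive.gaussSum_ne_zero (hχ : χ.IsPrimitive) : gaussSum χ ZMod.stdAddChar ≠ 0 := by
  intro h
  -- The Fourier transform of `χ` is a multiple of its Gauss sum, and the transform is injective.
  have hχ_zero : (χ : ZMod N → ℂ) = 0 := ZMod.dft.injective <| funext fun k ↦ by
    rw [hχ.fourierTransform_eq_inv_mul_gaussSum k, h, mul_zero, map_zero, Pi.zero_apply]
  simpa using congrFun hχ_zero 1

lemma IsPrimitive.rootNumber_ne_zero (hχ : χ.IsPrimitive) : rootNumber χ ≠ 0 := by
  have hN : (N : ℂ) ≠ 0 := Nat.cast_ne_zero.mpr (NeZero.ne N)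
  rw [rootNumber]
  exact div_ne_zero (div_ne_zero hχ.gaussSum_ne_zero (pow_ne_zero _ I_ne_zero))
    (by simp [cpow_eq_zero_iff, hN])

lemma IsPrimitive.completedLFunction_zero_ne_zero (hχ : χ.IsPrimitive) (hχ₁ : χ ≠ 1) :
    completedLFunction χ 0 ≠ 0 := by
  have hN : (N : ℂ) ≠ 0 := Nat.cast_ne_zero.mpr (NeZero.ne N)
  have hFE := hχ.completedLFunction_one_sub 1
  rw [sub_self] at hFE
  rw [hFE]
  refine mul_ne_zero (mul_ne_zero ?_ hχ.rootNumber_ne_zero)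
    (completedLFunction_one_ne_zero (inv_ne_one.mpr hχ₁))
  simp [cpow_eq_zero_iff, hN]

end DirichletCharacter

/-- If `χ` is a primitive, even, quadratic Dirichlet character modulo `f` with `f > 1`,
then `L'(0, χ) ≠ 0`, i.e. `L(s,χ)` has a simple zero at `s = 0`. -/
theorem deriv_LFunction_zero_ne_zero_of_primitive_even_quadratic
    (f : ℕ) (hf : 1 < f) (χ : DirichletCharacter ℂ f)
    (hne : χ ≠ 1) (heven : χ.Even) (hprim : χ.IsPrimitive) :
    haveI : NeZero f := ⟨by omega⟩
    deriv χ.LFunction 0 ≠ 0 := by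
  have : NeZero f := ⟨by omega⟩
  rw [(heven.hasDerivAt_LFunction_zero hne).deriv]
  exact div_ne_zero (hprim.completedLFunction_zero_ne_zero hne) two_ne_zero
end

section
/- Let p = 2k+1 be an odd prime. In the integral group ring R = ℤ[G] of the Klein four-group G, with a the image in R of the first generator of G (so a² = 1), the ideal generated by p and a − 1 equals the principal ideal generated by u = (k+1)·1 + k·a; that is, Ideal.span {(p : R), a − 1} = Ideal.span {(k+1)·1 + k·a}. (In the paper's notation, ⟨p, a_p − 1⟩ = ⟨(p+1)/2 + ((p−1)/2)·a_p⟩.) -/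
/-- Let `p = 2k+1` be an odd prime. In the integral group ring `R = ℤ[G]` of the Klein
four-group `G`, with `a` the image of the first generator (so `a² = 1`), the ideal
`⟨p, a - 1⟩` equals the principal ideal generated by `u = (k+1)·1 + k·a`. -/
theorem span_p_a_sub_one_eq_span_u
    (p k : ℕ) (hp : p.Prime) (hpk : p = 2 * k + 1) :
    letI G := Multiplicative (ZMod 2 × ZMod 2)
    letI R := MonoidAlgebra ℤ G
    letI a : R := MonoidAlgebra.of ℤ G (Multiplicative.ofAdd ((1 : ZMod 2), (0 : ZMod 2)))
    Ideal.span {(p : R), a - 1} = Ideal.span {((k : R) + 1) + (k : R) * a} := by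
  set G := Multiplicative (ZMod 2 × ZMod 2)
  set R := MonoidAlgebra ℤ G
  set a : R := MonoidAlgebra.of ℤ G (Multiplicative.ofAdd ((1 : ZMod 2), (0 : ZMod 2)))
    with ha_def
  show Ideal.span {(p : R), a - 1} = Ideal.span {((k : R) + 1) + (k : R) * a}
  have ha : a * a = 1 := by
    rw [ha_def, ← map_mul]
    have h : (Multiplicative.ofAdd ((1 : ZMod 2), (0 : ZMod 2))) *
        (Multiplicative.ofAdd ((1 : ZMod 2), (0 : ZMod 2))) = 1 := by decide
    rw [h, map_one]
  apply le_antisymm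
  · rw [Ideal.span_le]
    rintro x hx
    simp only [Set.mem_insert_iff, Set.mem_singleton_iff] at hx
    rcases hx with rfl | rfl
    · refine Ideal.mem_span_singleton.2 ⟨(k : R) + 1 - (k : R) * a, ?_⟩
      rw [hpk]
      push_cast
      linear_combination ((k : R) ^ 2) * ha
    · refine Ideal.mem_span_singleton.2 ⟨a - 1, ?_⟩
      linear_combination (-(k : R)) * ha
  · rw [Ideal.span_singleton_le_iff_mem]
    have h : (((k : R) + 1) + (k : R) * a) = (p : R) * 1 + (k : R) * (a - 1) := by
      rw [hpk]; push_cast; ring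
    rw [h]
    exact Ideal.add_mem _
      (Ideal.mul_mem_right _ _ (Ideal.subset_span (by simp)))
      (Ideal.mul_mem_left _ _ (Ideal.subset_span (by simp)))
end

section
/- Let p = 2k+1 be an odd prime. In the integral group ring R = ℤ[G] of the Klein four-group G, the element u = (k+1)·1 + k·a (where a is the image of the first generator of G, so a² = 1) is a non-zero-divisor; that is, the map R → R given by multiplication by u is injective. -/
/-!
Since `a² = 1`, the conjugate `(k+1) - k·a` satisfies `((k+1) - k·a) · u = (k+1)² - k² = 2k+1`.
So `u` divides a nonzero integer, which is a non-zero-divisor of `ℤ[G]` because `ℤ[G]` is a free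
`ℤ`-module.
-/

open Module

theorem isLeftRegular_of_mul_eq_algebraMap {R A : Type*} [CommSemiring R] [Semiring A]
    [Algebra R A] [IsTorsionFree R A] {r : R} (hr : IsRegular r) {u v : A}
    (h : v * u = algebraMap R A r) : IsLeftRegular u := by
  refine IsLeftRegular.of_mul (a := v) ?_
  rw [h]
  intro x y hxy
  refine hr.isSMulRegular ?_
  simpa only [Algebra.smul_def] using hxy

theorem isLeftRegular_natCast_add_one_add_mul {A : Type*} [CommRing A] [IsTorsionFree ℤ A]
    {a : A} (ha : a * a = 1) (k : ℕ) : IsLeftRegular ((k : A) + 1 + k * a) := by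
  have hconj : ((k + 1) - k * a) * ((k + 1) + k * a) = algebraMap ℤ A (2 * k + 1) := by
    rw [algebraMap_int_eq, eq_intCast]
    push_cast
    linear_combination (-(k : A) ^ 2) * ha
  exact isLeftRegular_of_mul_eq_algebraMap (IsRegular.of_ne_zero (by omega)) hconj

theorem mul_u_injective_general
    (k : ℕ) :
    letI G := Multiplicative (ZMod 2 × ZMod 2)
    letI R := MonoidAlgebra ℤ G
    letI a : R := MonoidAlgebra.of ℤ G (Multiplicative.ofAdd ((1 : ZMod 2), (0 : ZMod 2)))
    Function.Injective (fun x : R => (((k : R) + 1) + (k : R) * a) * x) := by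
  refine isLeftRegular_natCast_add_one_add_mul ?_ k
  rw [← map_mul, show Multiplicative.ofAdd ((1 : ZMod 2), (0 : ZMod 2)) *
    Multiplicative.ofAdd ((1 : ZMod 2), (0 : ZMod 2)) = 1 by decide, map_one]

/-- Let `p = 2k+1` be an odd prime. In the integral group ring `R = ℤ[G]` of the Klein
four-group `G`, the element `u = (k+1)·1 + k·a` (with `a` the image of the first generator,
so `a² = 1`) is a non-zero-divisor: multiplication by `u` is injective. -/
theorem mul_u_injective
    (p k : ℕ) (hp : p.Prime) (hpk : p = 2 * k + 1) :
    letI G := Multiplicative (ZMod 2 × ZMod 2)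
    letI R := MonoidAlgebra ℤ G
    letI a : R := MonoidAlgebra.of ℤ G (Multiplicative.ofAdd ((1 : ZMod 2), (0 : ZMod 2)))
    Function.Injective (fun x : R => (((k : R) + 1) + (k : R) * a) * x) :=
  mul_u_injective_general k
end

section
/- Let p = 2k+1 be an odd prime. In the integral group ring R = ℤ[G] of the Klein four-group G, with u = (k+1)·1 + k·a (where a is the image of the first generator of G, so a² = 1), the quotient ring R / Ideal.span {u} is finite of cardinality p². -/
/-!
Since `a² = 1`, the element `u = (k+1) + k·a` satisfies `u·((k+1) - k·a) = 2k+1 = p` and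
`u·(1 - a) = 1 - a`, while `u = p - k·(1 - a)`; hence `(u) = (p, 1 - a)`. Killing `p` and `a - 1`
collapses `ℤ[C₂ × C₂]` onto `(ℤ/p)[C₂]`: reduce the coefficients mod `p` and project onto the
second factor, the inclusion of the second factor inducing the inverse map. The latter ring is
free of rank `2` over `ℤ/p`, so it has `p²` elements.
-/

open MonoidAlgebra

namespace MonoidAlgebra

section Card

variable {k M : Type*} [Semiring k]

instance instFinite [Finite k] [Finite M] : Finite k[M] :=
  .of_equiv _ (coeffEquiv.trans Finsupp.equivFunOnFinite).symm

theorem natCard_eq_pow [Finite M] : Nat.card k[M] = Nat.card k ^ Nat.card M := by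
  rw [Nat.card_congr (coeffEquiv.trans Finsupp.equivFunOnFinite), Nat.card_fun]

end Card

section Reduce

variable {G H : Type*} [CommGroup G] [Group H]

noncomputable def reduceAlong (n : ℕ) (π : G →* H) : ℤ[G] →+* (ZMod n)[H] :=
  (lift ℤ (ZMod n)[H] G ((of (ZMod n) H).comp π)).toRingHom

@[simp]
theorem reduceAlong_single (n : ℕ) (π : G →* H) (g : G) (m : ℤ) :
    reduceAlong n π (single g m) = single (π g) (m : ZMod n) := by
  simp [reduceAlong, lift_single]

/-- The inverse sends `of h` to the class of `of (σ h)`; it exists because `n = 0` in the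
quotient, and it is inverse because every `g` is `σ (π g)` times an element of `ker π`. -/
noncomputable def quotientEquivOfSection (n : ℕ) (π : G →* H) (σ : H →* G)
    (hσ : ∀ h, π (σ h) = h) (I : Ideal ℤ[G]) (hn : (n : ℤ[G]) ∈ I)
    (hker : ∀ g, π g = 1 → of ℤ G g - 1 ∈ I) (hI : I ≤ RingHom.ker (reduceAlong n π)) :
    ℤ[G] ⧸ I ≃+* (ZMod n)[H] :=
  have hn' : ((n : ℕ) : ℤ[G] ⧸ I) = 0 := by
    rwa [← map_natCast (Ideal.Quotient.mk I), Ideal.Quotient.eq_zero_iff_mem]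
  RingEquiv.ofRingHom
    (Ideal.Quotient.lift I (reduceAlong n π) fun _ hx ↦ RingHom.mem_ker.mp (hI hx))
    (liftNCRingHom (ZMod.castHom (ringChar.dvd hn') _)
      ((Ideal.Quotient.mk I : ℤ[G] →* ℤ[G] ⧸ I).comp ((of ℤ G).comp σ))
      fun _ _ ↦ Commute.all _ _)
    (ringHom_ext' (Subsingleton.elim _ _) <| MonoidHom.ext fun h ↦ by
      simp [hσ, -ZMod.castHom_apply])
    (Ideal.Quotient.ringHom_ext <| ringHom_ext' (Subsingleton.elim _ _) <| MonoidHom.ext fun g ↦ by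
      have hg : π (g * (σ (π g))⁻¹) = 1 := by simp [hσ]
      have hprod : of ℤ G (g * (σ (π g))⁻¹) * of ℤ G (σ (π g)) = of ℤ G g := by
        rw [← map_mul, inv_mul_cancel_right]
      simp [-ZMod.castHom_apply]
      rw [Ideal.Quotient.eq, ← of_apply, ← of_apply, ← hprod, ← neg_sub, ← sub_one_mul]
      exact neg_mem (I.mul_mem_right _ (hker _ hg)))

end Reduce

end MonoidAlgebra

theorem Ideal.span_singleton_natCast_add_one_add_mul_eq {S : Type*} [CommRing S] {a : S}
    (ha : a * a = 1) (k : ℕ) :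
    span {(k : S) + 1 + k * a} = span {((2 * k + 1 : ℕ) : S), 1 - a} := by
  refine le_antisymm (span_le.2 ?_) (span_le.2 ?_)
  · rintro _ rfl
    exact mem_span_pair.2 ⟨1, -k, by push_cast; ring⟩
  · rintro _ (rfl | rfl)
    · exact mem_span_singleton'.2
        ⟨k + 1 - k * a, by push_cast; linear_combination (-(k : S) ^ 2) * ha⟩
    · exact mem_span_singleton'.2 ⟨1 - a, by linear_combination (-(k : S)) * ha⟩

noncomputable def kleinFourQuotientEquiv (n : ℕ) :
    ℤ[Multiplicative (ZMod 2 × ZMod 2)] ⧸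
        Ideal.span {(n : ℤ[Multiplicative (ZMod 2 × ZMod 2)]), 1 - of ℤ _ (.ofAdd (1, 0))} ≃+*
      (ZMod n)[Multiplicative (ZMod 2)] :=
  quotientEquivOfSection n (AddMonoidHom.snd _ _).toMultiplicative
    (AddMonoidHom.inr _ _).toMultiplicative (fun _ ↦ rfl) _ (Ideal.subset_span (by simp))
    (by
      intro g hg
      obtain rfl | rfl : g = 1 ∨ g = .ofAdd (1, 0) := by revert g; decide
      · simp [← one_def]
      · exact Ideal.mem_span_pair.2 ⟨0, -1, by ring⟩)
    (by
      rw [Ideal.span_le, Set.insert_subset_iff, Set.singleton_subset_iff]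
      simp [← one_def, natCast_def])

theorem quotient_span_u_finite_card_p_sq_general
    (p k : ℕ) (hpk : p = 2 * k + 1) :
    letI G := Multiplicative (ZMod 2 × ZMod 2)
    letI R := MonoidAlgebra ℤ G
    letI a : R := MonoidAlgebra.of ℤ G (Multiplicative.ofAdd ((1 : ZMod 2), (0 : ZMod 2)))
    Finite (R ⧸ Ideal.span {((k : R) + 1) + (k : R) * a}) ∧
      Nat.card (R ⧸ Ideal.span {((k : R) + 1) + (k : R) * a}) = p ^ 2 := by
  have ha : of ℤ (Multiplicative (ZMod 2 × ZMod 2)) (.ofAdd (1, 0)) *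
      of ℤ (Multiplicative (ZMod 2 × ZMod 2)) (.ofAdd (1, 0)) = 1 := by
    rw [← map_mul, ← map_one (of ℤ _)]
    rfl
  subst hpk
  rw [Ideal.span_singleton_natCast_add_one_add_mul_eq ha]
  let e := kleinFourQuotientEquiv (2 * k + 1)
  exact ⟨.of_equiv _ e.symm.toEquiv, by rw [Nat.card_congr e.toEquiv, natCard_eq_pow]; simp⟩

/-- Let `p = 2k+1` be an odd prime. In the integral group ring `R = ℤ[G]` of the Klein
four-group `G`, with `u = (k+1)·1 + k·a` (where `a` is the image of the first generator,
so `a² = 1`), the quotient ring `R / (u)` is finite of cardinality `p²`. -/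
theorem quotient_span_u_finite_card_p_sq
    (p k : ℕ) (hp : p.Prime) (hpk : p = 2 * k + 1) :
    letI G := Multiplicative (ZMod 2 × ZMod 2)
    letI R := MonoidAlgebra ℤ G
    letI a : R := MonoidAlgebra.of ℤ G (Multiplicative.ofAdd ((1 : ZMod 2), (0 : ZMod 2)))
    Finite (R ⧸ Ideal.span {((k : R) + 1) + (k : R) * a}) ∧
      Nat.card (R ⧸ Ideal.span {((k : R) + 1) + (k : R) * a}) = p ^ 2 :=
  quotient_span_u_finite_card_p_sq_general p k hpk
end

section
/- Let p = 2k+1 be an odd prime, let F = 𝔽_{p²} be the field with p² elements, and let b₀ ∈ F be a normal basis element, i.e. b₀ and b₀^p are linearly independent over 𝔽_p. Let φ : R → F be the ℤ-linear map from the integral group ring R = ℤ[G] of the Klein four-group G determined on the group basis by φ(1) = φ(a) = b₀ and φ(b) = φ(a·b) = b₀^p (so the first generator a acts trivially on F and the second generator b acts as the Frobenius x ↦ x^p, and φ sends a group element g to g·b₀). Then φ is surjective and its kernel is exactly the ideal Ideal.span {(p : R), a − 1} = Ideal.span {(k+1)·1 + k·a}; in other words 0 → ℤ[G] →(·u) ℤ[G]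 →φ 𝔽_{p²} → 0 is a short exact sequence, where u = (k+1)·1 + k·a. -/
/-!
Since `a` acts trivially on `𝔽_{p²}`, `φ` factors through `ℤ[G] ⧸ (a - 1)`, which is spanned over
`ℤ` by `1` and `b`; as `φ(m + n b) = m b₀ + n b₀^p` and `b₀, b₀^p` is an `𝔽_p`-basis, `φ` is onto
and `m + n b` lies in the kernel exactly when `p ∣ m` and `p ∣ n`. The two descriptions of the
kernel agree because `(k + 1 + k a)(k + 1 - k a) = 2k + 1` once `a² = 1`.
-/

theorem Ideal.span_natCast_sub_one_eq_span_singleton {R : Type*} [CommRing R] {a : R}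
    (ha : a * a = 1) {p k : ℕ} (hpk : p = 2 * k + 1) :
    Ideal.span {(p : R), a - 1} = Ideal.span {(k : R) + 1 + k * a} := by
  subst hpk
  apply le_antisymm
  · rw [Ideal.span_le, Set.insert_subset_iff, Set.singleton_subset_iff]
    refine ⟨Ideal.mem_span_singleton'.2 ⟨k + 1 - k * a, ?_⟩,
      Ideal.mem_span_singleton'.2 ⟨a - 1, ?_⟩⟩
    · push_cast
      linear_combination (-(k : R) ^ 2) * ha
    · linear_combination (k : R) * ha
  · rw [Ideal.span_singleton_le_iff_mem, Ideal.mem_span_pair]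
    exact ⟨1, k, by push_cast; ring⟩

theorem LinearIndependent.zsmul_add_zsmul_eq_zero_iff {p : ℕ} {V : Type*} [AddCommGroup V]
    [Module (ZMod p) V] {v w : V} (h : LinearIndependent (ZMod p) ![v, w]) (m n : ℤ) :
    m • v + n • w = 0 ↔ (p : ℤ) ∣ m ∧ (p : ℤ) ∣ n := by
  simp only [← Int.cast_smul_eq_zsmul (ZMod p), ← ZMod.intCast_zmod_eq_zero_iff_dvd]
  exact ⟨LinearIndependent.pair_iff.1 h _ _, fun ⟨hm, hn⟩ => by simp [hm, hn]⟩

theorem LinearIndependent.exists_zsmul_add_zsmul_eq {p : ℕ} [Fact p.Prime] {V : Type*}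
    [AddCommGroup V] [Module (ZMod p) V] (hV : Module.finrank (ZMod p) V = 2) {v w : V}
    (h : LinearIndependent (ZMod p) ![v, w]) (y : V) : ∃ m n : ℤ, m • v + n • w = y := by
  have hy : y ∈ Submodule.span (ZMod p) (Set.range ![v, w]) := by
    rw [h.span_eq_top_of_card_eq_finrank (by simp [hV])]
    trivial
  obtain ⟨c, rfl⟩ := (Submodule.mem_span_range_iff_exists_fun _).1 hy
  refine ⟨(c 0).cast, (c 1).cast, ?_⟩
  simp [← Int.cast_smul_eq_zsmul (ZMod p), Fin.sum_univ_two]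

theorem MonoidAlgebra.apply_mul_of_eq_apply {k G M : Type*} [CommSemiring k] [Monoid G]
    [AddCommMonoid M] [Module k M] (φ : MonoidAlgebra k G →ₗ[k] M) {h : G}
    (hφ : ∀ g, φ (of k G (g * h)) = φ (of k G g)) (x : MonoidAlgebra k G) :
    φ (x * of k G h) = φ x := by
  induction x using MonoidAlgebra.induction_on with
  | of g => rw [← map_mul, hφ]
  | add x y hx hy => rw [add_mul, map_add, map_add, hx, hy]
  | smul r x hx => rw [smul_mul_assoc, map_smul, map_smul, hx]

theorem LinearMap.map_eq_zero_of_mem_span_natCast_sub_one {p : ℕ} {R M : Type*} [CommRing R]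
    [AddCommGroup M] [Module (ZMod p) M] (φ : R →ₗ[ℤ] M) {a : R} (ha : ∀ x, φ (x * a) = φ x)
    {x : R} (hx : x ∈ Ideal.span {(p : R), a - 1}) : φ x = 0 := by
  obtain ⟨u, v, rfl⟩ := Ideal.mem_span_pair.1 hx
  rw [mul_sub, mul_one, map_add, map_sub, ha, sub_self, add_zero, mul_comm, ← nsmul_eq_mul,
    map_nsmul, ← Nat.cast_smul_eq_nsmul (ZMod p), ZMod.natCast_self, zero_smul]

section KleinFourGroupRing

local notation "V₄" => Multiplicative (ZMod 2 × ZMod 2)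
local notation "𝐚" => MonoidAlgebra.of ℤ V₄ (Multiplicative.ofAdd ((1 : ZMod 2), (0 : ZMod 2)))
local notation "𝐛" => MonoidAlgebra.of ℤ V₄ (Multiplicative.ofAdd ((0 : ZMod 2), (1 : ZMod 2)))

theorem kleinFour_exists_intCast_add_intCast_mul_sub_mem_span (x : MonoidAlgebra ℤ V₄) :
    ∃ m n : ℤ, x - (m + n * 𝐛) ∈ Ideal.span {𝐚 - 1} := by
  induction x using MonoidAlgebra.induction_on with
  | of g =>
    have hg : g = 1 ∨ g = .ofAdd (1, 0) ∨ g = .ofAdd (0, 1) ∨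
        g = .ofAdd (1, 0) * .ofAdd (0, 1) := by
      revert g; decide
    have ha : 𝐚 - 1 ∈ Ideal.span {𝐚 - 1} := Ideal.mem_span_singleton_self _
    rcases hg with rfl | rfl | rfl | rfl
    · exact ⟨1, 0, by simp [map_one]⟩
    · exact ⟨1, 0, by simpa only [Int.cast_one, Int.cast_zero, zero_mul, add_zero] using ha⟩
    · exact ⟨0, 1, by simp⟩
    · refine ⟨0, 1, ?_⟩
      rw [map_mul, Int.cast_zero, Int.cast_one, zero_add, one_mul, ← sub_one_mul]
      exact Ideal.mul_mem_right _ _ ha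
  | add x y hx hy =>
    obtain ⟨m, n, hmn⟩ := hx
    obtain ⟨m', n', hmn'⟩ := hy
    refine ⟨m + m', n + n', ?_⟩
    convert add_mem hmn hmn' using 1
    push_cast; ring
  | smul r x hx =>
    obtain ⟨m, n, hmn⟩ := hx
    refine ⟨r * m, r * n, ?_⟩
    convert Ideal.mul_mem_left _ (r : MonoidAlgebra ℤ V₄) hmn using 1
    rw [zsmul_eq_mul]; push_cast; ring

/-- Let `p = 2k+1` be an odd prime, `F = 𝔽_{p²}` and `b₀ ∈ F` a normal basis element
(`b₀, b₀^p` linearly independent over `𝔽_p`). Let `φ : ℤ[G] → F` be the ℤ-linear map from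
the integral group ring of the Klein four-group `G` sending a group element `g` to `b₀` if
`g` lies in the (inertia) subgroup generated by the first generator `a`, and to `b₀^p`
otherwise (so `a` acts trivially and the second generator `b` acts as Frobenius).
Then `φ` is surjective with kernel exactly `⟨p, a - 1⟩ = ⟨(k+1)·1 + k·a⟩`; i.e.
`0 → ℤ[G] →(·u) ℤ[G] →φ 𝔽_{p²} → 0` is a short exact sequence with `u = (k+1)·1 + k·a`. -/
theorem group_ring_resolution_of_residue_field
    (p k : ℕ) (hp : p.Prime) (hpk : p = 2 * k + 1) :
    letI : Fact p.Prime := ⟨hp⟩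
    letI G := Multiplicative (ZMod 2 × ZMod 2)
    letI R := MonoidAlgebra ℤ G
    letI a : R := MonoidAlgebra.of ℤ G (Multiplicative.ofAdd ((1 : ZMod 2), (0 : ZMod 2)))
    ∀ b₀ : GaloisField p 2, LinearIndependent (ZMod p) ![b₀, b₀ ^ p] →
      ∀ φ : R →ₗ[ℤ] GaloisField p 2,
        (∀ g : G, φ (MonoidAlgebra.of ℤ G g) =
          if (Multiplicative.toAdd g).2 = 0 then b₀ else b₀ ^ p) →
        Function.Surjective φ ∧
          (∀ x : R, φ x = 0 ↔ x ∈ Ideal.span {(p : R), a - 1}) ∧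
          Ideal.span {(p : R), a - 1} = Ideal.span {((k : R) + 1) + (k : R) * a} := by
  have : Fact p.Prime := ⟨hp⟩
  intro b₀ hb φ hφ
  have hφa : ∀ x, φ (x * 𝐚) = φ x := MonoidAlgebra.apply_mul_of_eq_apply φ fun g => by
    rw [hφ, hφ, toAdd_mul, Prod.snd_add, toAdd_ofAdd, add_zero]
  have hφI : ∀ x ∈ Ideal.span {(p : MonoidAlgebra ℤ V₄), 𝐚 - 1}, φ x = 0 := fun x hx =>
    φ.map_eq_zero_of_mem_span_natCast_sub_one hφa hx
  have ha : 𝐚 * 𝐚 = 1 := by rw [← map_mul, ← map_one (MonoidAlgebra.of ℤ V₄)]; rfl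
  have hφmn : ∀ m n : ℤ, φ (m + n * 𝐛) = m • b₀ + n • b₀ ^ p := by
    intro m n
    have h1 : φ 1 = b₀ := by rw [← map_one (MonoidAlgebra.of ℤ V₄), hφ, if_pos (by decide)]
    have hφb : φ 𝐛 = b₀ ^ p := by rw [hφ, if_neg (by decide)]
    rw [map_add, ← zsmul_eq_mul, map_zsmul, ← zsmul_one, map_zsmul, h1, hφb]
  refine ⟨fun y => ?_, fun x => ⟨fun hx => ?_, hφI x⟩,
    Ideal.span_natCast_sub_one_eq_span_singleton ha hpk⟩
  · obtain ⟨m, n, rfl⟩ := hb.exists_zsmul_add_zsmul_eq (GaloisField.finrank p two_ne_zero) y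
    exact ⟨_, hφmn m n⟩
  · obtain ⟨m, n, hmn⟩ := kleinFour_exists_intCast_add_intCast_mul_sub_mem_span x
    have hmnI := Ideal.span_mono (Set.subset_insert (p : MonoidAlgebra ℤ V₄) _) hmn
    obtain ⟨⟨m', rfl⟩, ⟨n', rfl⟩⟩ : (p : ℤ) ∣ m ∧ (p : ℤ) ∣ n := by
      rw [← hb.zsmul_add_zsmul_eq_zero_iff, ← hφmn, ← hx, eq_comm, ← sub_eq_zero, ← map_sub]
      exact hφI _ hmnI
    rw [← sub_add_cancel x (_ + _ * 𝐛)]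
    exact add_mem hmnI (Ideal.mem_span_pair.2 ⟨m' + n' * 𝐛, 0, by push_cast; ring⟩)

end KleinFourGroupRing
end
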